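/- Let 𝒜 = 𝒜^k_ℓ(r) with r ≥ 3, ℓ ≥ 5, 1 ≤ k ≤ ℓ − 3, and H₀ = ker(x_s − x_t) with 1 ≤ s < t ≤ ℓ − 3. Let Z = ∩_{ℓ−2 ≤ i < j ≤ ℓ} H_{i,j}(ζ) where the intersection runs over all hyperplanes ker(x_i − ζⁿ x_j) with ℓ−2 ≤ i < j ≤ ℓ, and let X = H₀ ∩ Z, which has rank 3 in L(𝒜''). Then the localization ((𝒜'')_X, κ_X) of the Ziegler restriction (𝒜'', κ) at X is the simple arrangement isomorphic to the reflection arrangement 𝒜(G(r,r,3)), i.e., κ_X ≡ 1 and (𝒜'')_X ≅ 𝒜(G(r,r,3)). -/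
import Mathlib


open Classical MvPolynomial Module
open scoped Classical

noncomputable section

namespace Arrangement

variable (K : Type) [Field K]

/-- Index type for the polynomial ring `S = Sym(V*)`, realized as a polynomial
ring in coordinates coming from a chosen basis of `V`. -/
abbrev bIdx (V : Type) [AddCommGroup V] [Module K V] : Type := Basis.ofVectorSpaceIndex K V

/-- The coordinate ring `S = Sym(V*)` realized as a multivariate polynomial ring. -/
abbrev Poly (V : Type) [AddCommGroup V] [Module K V] : Type := MvPolynomial (bIdx K V) K

/-- Derivations of `S`, written in coordinates: a derivation is determined by its
values on the variables. -/
abbrev Der (V : Type) [AddCommGroup V] [Module K V] : Type := bIdx K V → Poly K V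

variable {V : Type} [AddCommGroup V] [Module K V] [FiniteDimensional K V]

/-- The degree one polynomial attached to a linear form on `V`. -/
def toPoly (f : Module.Dual K V) : Poly K V :=
  ∑ i : bIdx K V, MvPolynomial.C (f (Basis.ofVectorSpace K V i)) * MvPolynomial.X i

/-- Apply the derivation `θ` to a polynomial. -/
def applyDer (θ : Der K V) (p : Poly K V) : Poly K V :=
  ∑ i : bIdx K V, θ i * MvPolynomial.pderiv i p

/-- A choice of defining linear form for a hyperplane `H` (any linear form with
kernel `H`; for submodules that are not hyperplanes this is junk). -/
def formOf (H : Submodule K V) : Module.Dual K V :=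
  if h : ∃ f : Module.Dual K V, LinearMap.ker f = H then h.choose else 0

/-- The defining linear polynomial `α_H` of a hyperplane. -/
def polyOf (H : Submodule K V) : Poly K V := toPoly K (formOf K H)

/-- The module `D(𝒜, μ)` of derivations of the multiarrangement `(𝒜, μ)`. -/
def derMod (A : Finset (Submodule K V)) (μ : Submodule K V → ℕ) :
    Submodule (Poly K V) (Der K V) where
  carrier := {θ | ∀ H ∈ A, (polyOf K H) ^ (μ H) ∣ applyDer K θ (polyOf K H)}
  zero_mem' := by intro H hH; simp [applyDer]
  add_mem' := by
    intro a b ha hb H hH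
    have h : applyDer K (a + b) (polyOf K H)
        = applyDer K a (polyOf K H) + applyDer K b (polyOf K H) := by
      simp [applyDer, add_mul, Finset.sum_add_distrib]
    rw [h]; exact dvd_add (ha H hH) (hb H hH)
  smul_mem' := by
    intro c a ha H hH
    have h : applyDer K (c • a) (polyOf K H) = c * applyDer K a (polyOf K H) := by
      simp [applyDer, Finset.mul_sum, mul_assoc]
    rw [h]; exact Dvd.dvd.mul_left (ha H hH) c

/-- `θ` is homogeneous of polynomial degree `p` (in coordinates: all components
are homogeneous polynomials of degree `p`). -/
def IsHomogDer (θ : Der K V) (p : ℕ) : Prop := ∀ i, (θ i).IsHomogeneous p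

/-- The multiarrangement `(𝒜, μ)` is free with exponents `E` : `D(𝒜,μ)` admits a
homogeneous basis whose multiset of polynomial degrees is `E`. -/
def FreeExp (A : Finset (Submodule K V)) (μ : Submodule K V → ℕ) (E : Multiset ℕ) : Prop :=
  ∃ (b : Basis (Fin (Module.finrank K V)) (Poly K V) (derMod K A μ))
    (d : Fin (Module.finrank K V) → ℕ),
      (∀ j, IsHomogDer K (b j : Der K V) (d j)) ∧ E = Multiset.map d Finset.univ.val

/-- The multiarrangement `(𝒜, μ)` is free. -/
def IsFree (A : Finset (Submodule K V)) (μ : Submodule K V → ℕ) : Prop :=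
  ∃ E, FreeExp K A μ E

/-- The constant multiplicity `1` (simple arrangement). -/
def one : Submodule K V → ℕ := fun _ => 1

/-- The localization `𝒜_X` of `𝒜` at `X`. -/
def loc (A : Finset (Submodule K V)) (X : Submodule K V) : Finset (Submodule K V) :=
  A.filter fun H => X ≤ H

/-- The restriction `𝒜^{H₀}` of `𝒜` to `H₀`, as an arrangement in `H₀`. -/
def restr (A : Finset (Submodule K V)) (H₀ : Submodule K V) : Finset (Submodule K ↥H₀) :=
  (A.erase H₀).image fun H => H.comap H₀.subtype

/-- Ziegler's canonical multiplicity `κ` on the restriction `𝒜^{H₀}`: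
`κ(Y) = |𝒜_Y| - 1`. -/
def ziegler (A : Finset (Submodule K V)) (H₀ : Submodule K V) : Submodule K ↥H₀ → ℕ :=
  fun Y => (loc K A (Y.map H₀.subtype)).card - 1

/-- The order `|μ|` of a multiarrangement. -/
def msize (A : Finset (Submodule K V)) (μ : Submodule K V → ℕ) : ℕ := ∑ H ∈ A, μ H

/-- The rank of an arrangement: the codimension of the intersection of all its
hyperplanes. -/
def arrRank (A : Finset (Submodule K V)) : ℕ :=
  Module.finrank K V - Module.finrank K ↥(A.inf id)

/-- The multiplicity `δ_{H₀, m₀}` concentrated at `H₀`. -/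
def concMult (H₀ : Submodule K V) (m₀ : ℕ) : Submodule K V → ℕ :=
  fun H => if H = H₀ then m₀ else 1

/-- The underlying arrangement of the deletion `(𝒜', μ')` w.r.t. `H₀`. -/
def delArr (A : Finset (Submodule K V)) (μ : Submodule K V → ℕ) (H₀ : Submodule K V) :
    Finset (Submodule K V) :=
  if μ H₀ = 1 then A.erase H₀ else A

/-- The multiplicity of the deletion `(𝒜', μ')` w.r.t. `H₀`. -/
def delMult (μ : Submodule K V → ℕ) (H₀ : Submodule K V) : Submodule K V → ℕ :=
  fun H => if H = H₀ then μ H₀ - 1 else μ H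

/-- `θ ∈ α · Der(S)`: every component of `θ` is divisible by `α`. -/
def divDer (α : Poly K V) (θ : Der K V) : Prop := ∀ i, α ∣ θ i

/-- The Euler multiplicity `μ*` on the restriction `𝒜^{H₀}`: for `Y ∈ 𝒜^{H₀}`,
`μ*(Y)` is the polynomial degree of the distinguished basis element
`θ_Y ∉ α₀·Der(S)` in a homogeneous basis `{θ_Y, ψ_Y, D₃, …, D_ℓ}` of
`D(𝒜_Y, μ_Y)` with `ψ_Y ∈ α₀·Der(S)` and `D₃, …, D_ℓ` of degree `0`. -/
def eulerMult (A : Finset (Submodule K V)) (μ : Submodule K V → ℕ) (H₀ : Submodule K V) :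
    Submodule K ↥H₀ → ℕ := fun Y =>
  sInf {p : ℕ |
    ∃ (b : Basis (Fin (Module.finrank K V)) (Poly K V)
          (derMod K (loc K A (Y.map H₀.subtype)) μ))
      (d : Fin (Module.finrank K V) → ℕ) (j₀ j₁ : Fin (Module.finrank K V)),
        j₀ ≠ j₁ ∧ (∀ j, IsHomogDer K (b j : Der K V) (d j)) ∧
        ¬ divDer K (polyOf K H₀) (b j₀) ∧ divDer K (polyOf K H₀) (b j₁) ∧
        (∀ j, j ≠ j₀ → j ≠ j₁ → d j = 0) ∧ d j₀ = p}

/-- Inductively free (simple) arrangements. -/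
inductive IndFree :
    ∀ (V : Type) [AddCommGroup V] [Module K V] [FiniteDimensional K V],
      Finset (Submodule K V) → Prop
  | empty (V : Type) [AddCommGroup V] [Module K V] [FiniteDimensional K V] :
      IndFree V (∅ : Finset (Submodule K V))
  | step (V : Type) [AddCommGroup V] [Module K V] [FiniteDimensional K V]
      (A : Finset (Submodule K V)) (H₀ : Submodule K V) (hH₀ : H₀ ∈ A)
      (E' E'' : Multiset ℕ)
      (hfree' : FreeExp K (A.erase H₀) (one K) E')
      (hfree'' : FreeExp K (restr K A H₀) (one K) E'')
      (hle : E'' ≤ E')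
      (ih' : IndFree V (A.erase H₀))
      (ih'' : IndFree ↥H₀ (restr K A H₀)) :
      IndFree V A

/-- Inductively free multiarrangements. -/
inductive MIndFree :
    ∀ (V : Type) [AddCommGroup V] [Module K V] [FiniteDimensional K V],
      Finset (Submodule K V) → (Submodule K V → ℕ) → Prop
  | empty (V : Type) [AddCommGroup V] [Module K V] [FiniteDimensional K V]
      (μ : Submodule K V → ℕ) :
      MIndFree V (∅ : Finset (Submodule K V)) μ
  | step (V : Type) [AddCommGroup V] [Module K V] [FiniteDimensional K V]
      (A : Finset (Submodule K V)) (μ : Submodule K V → ℕ)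
      (H₀ : Submodule K V) (hH₀ : H₀ ∈ A) (hμ : 1 ≤ μ H₀)
      (E' E'' : Multiset ℕ)
      (hfree' : FreeExp K (delArr K A μ H₀) (delMult K μ H₀) E')
      (hfree'' : FreeExp K (restr K A H₀) (eulerMult K A μ H₀) E'')
      (hle : E'' ≤ E')
      (ih' : MIndFree V (delArr K A μ H₀) (delMult K μ H₀))
      (ih'' : MIndFree ↥H₀ (restr K A H₀) (eulerMult K A μ H₀)) :
      MIndFree V A μ

/-- Linear isomorphism of arrangements. -/
def ArrIso {V₁ V₂ : Type} [AddCommGroup V₁] [Module K V₁] [AddCommGroup V₂] [Module K V₂]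
    (A₁ : Finset (Submodule K V₁)) (A₂ : Finset (Submodule K V₂)) : Prop :=
  ∃ e : V₁ ≃ₗ[K] V₂, A₂ = A₁.image (Submodule.map (e : V₁ →ₗ[K] V₂))

end Arrangement

namespace Arrangement

/-- A primitive `r`-th root of unity. -/
def zeta (r : ℕ) : ℂ := Complex.exp (2 * Real.pi * Complex.I / r)

/-- The linear form `x_i - ζ^n x_j` on `ℂ^ℓ`. -/
def formIJ (ℓ : ℕ) (i j : Fin ℓ) (r n : ℕ) : Module.Dual ℂ (Fin ℓ → ℂ) :=
  LinearMap.proj i - (zeta r) ^ n • LinearMap.proj j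

/-- The coordinate linear form `x_i` on `ℂ^ℓ`. -/
def coordForm (ℓ : ℕ) (i : Fin ℓ) : Module.Dual ℂ (Fin ℓ → ℂ) :=
  LinearMap.proj i

/-- The intermediate arrangement `𝒜^k_ℓ(r)` of Orlik–Solomon, with defining
polynomial `x₁ ⋯ x_k ∏_{i<j, 0 ≤ n < r} (x_i - ζ^n x_j)`. -/
def interArr (r ℓ k : ℕ) : Finset (Submodule ℂ (Fin ℓ → ℂ)) :=
  ((Finset.univ : Finset (Fin ℓ)).filter fun i : Fin ℓ => (i : ℕ) < k).image
      (fun i => LinearMap.ker (coordForm ℓ i)) ∪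
  ((Finset.univ : Finset (Fin ℓ × Fin ℓ × Fin r)).filter fun t => t.1 < t.2.1).image
      (fun t => LinearMap.ker (formIJ ℓ t.1 t.2.1 r (t.2.2 : ℕ)))

end Arrangement

namespace Arrangement

/-- The intersection `Z = ⋂_{ℓ-2 ≤ i < j ≤ ℓ, 0 ≤ n < r} ker(x_i - ζⁿ x_j)`
(in 1-based indexing; the pairs run over the last three coordinates). -/
def bigZ (r ℓ : ℕ) : Submodule ℂ (Fin ℓ → ℂ) :=
  (((Finset.univ : Finset (Fin ℓ × Fin ℓ × Fin r)).filter fun u =>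
      u.1 < u.2.1 ∧ ℓ - 3 ≤ (u.1 : ℕ)).inf
    fun u => LinearMap.ker (formIJ ℓ u.1 u.2.1 r (u.2.2 : ℕ)))

/-- `X = H₀ ∩ Z`, viewed as a subspace of the hyperplane `H₀`. -/
def bigX (r ℓ : ℕ) (s t : Fin ℓ) : Submodule ℂ ↥(LinearMap.ker (formIJ ℓ s t r 0)) :=
  (bigZ r ℓ).comap (LinearMap.ker (formIJ ℓ s t r 0)).subtype


section Aux

open LinearMap

lemma zeta_prim {r : ℕ} (hr : r ≠ 0) : IsPrimitiveRoot (zeta r) r :=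
  Complex.isPrimitiveRoot_exp r hr

lemma zeta_pow_ne_zero {r : ℕ} (hr : r ≠ 0) (n : ℕ) : zeta r ^ n ≠ 0 :=
  pow_ne_zero _ ((zeta_prim hr).ne_zero hr)

lemma zeta_pow_inj {r : ℕ} (hr : r ≠ 0) {m n : ℕ} (hm : m < r) (hn : n < r)
    (h : zeta r ^ m = zeta r ^ n) : m = n :=
  (zeta_prim hr).pow_inj hm hn h

lemma mem_ker_formIJ {ℓ r n : ℕ} {i j : Fin ℓ} {x : Fin ℓ → ℂ} :
    x ∈ LinearMap.ker (formIJ ℓ i j r n) ↔ x i = zeta r ^ n * x j := by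
  simp [formIJ, LinearMap.mem_ker, LinearMap.sub_apply, LinearMap.smul_apply,
    LinearMap.proj_apply, smul_eq_mul, sub_eq_zero]

lemma mem_ker_coordForm {ℓ : ℕ} {i : Fin ℓ} {x : Fin ℓ → ℂ} :
    x ∈ LinearMap.ker (coordForm ℓ i) ↔ x i = 0 := by
  simp [coordForm, LinearMap.mem_ker, LinearMap.proj_apply]

lemma mem_H0 {ℓ r : ℕ} {s t : Fin ℓ} {x : Fin ℓ → ℂ} :
    x ∈ LinearMap.ker (formIJ ℓ s t r 0) ↔ x s = x t := by
  rw [mem_ker_formIJ, pow_zero, one_mul]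

lemma mem_interArr {r ℓ k : ℕ} {H : Submodule ℂ (Fin ℓ → ℂ)} :
    H ∈ interArr r ℓ k ↔
      (∃ i : Fin ℓ, (i : ℕ) < k ∧ H = LinearMap.ker (coordForm ℓ i)) ∨
      (∃ (i j : Fin ℓ) (n : Fin r), i < j ∧ H = LinearMap.ker (formIJ ℓ i j r (n : ℕ))) := by
  constructor
  · intro h
    rcases Finset.mem_union.mp h with h | h
    · obtain ⟨i, hi, rfl⟩ := Finset.mem_image.mp h
      exact Or.inl ⟨i, (Finset.mem_filter.mp hi).2, rfl⟩
    · obtain ⟨u, hu, rfl⟩ := Finset.mem_image.mp h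
      exact Or.inr ⟨u.1, u.2.1, u.2.2, (Finset.mem_filter.mp hu).2, rfl⟩
  · rintro (⟨i, hik, rfl⟩ | ⟨i, j, n, hij, rfl⟩)
    · exact Finset.mem_union_left _ (Finset.mem_image.mpr
        ⟨i, Finset.mem_filter.mpr ⟨Finset.mem_univ _, hik⟩, rfl⟩)
    · exact Finset.mem_union_right _ (Finset.mem_image.mpr
        ⟨⟨i, j, n⟩, Finset.mem_filter.mpr ⟨Finset.mem_univ _, hij⟩, rfl⟩)

lemma mem_bigZ_of {r ℓ : ℕ} {x : Fin ℓ → ℂ} (h : ∀ u : Fin ℓ, ℓ - 3 ≤ (u : ℕ) → x u = 0) :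
    x ∈ bigZ r ℓ := by
  rw [bigZ, Submodule.mem_finsetInf]
  intro u hu
  obtain ⟨h1, h2⟩ := (Finset.mem_filter.mp hu).2
  have h1' : (u.1 : ℕ) < (u.2.1 : ℕ) := h1
  rw [mem_ker_formIJ, h u.1 h2, h u.2.1 (by omega), mul_zero]

lemma mem_bigZ_iff {r ℓ : ℕ} (hr : 3 ≤ r) (hl : 5 ≤ ℓ) {x : Fin ℓ → ℂ} :
    x ∈ bigZ r ℓ ↔ ∀ u : Fin ℓ, ℓ - 3 ≤ (u : ℕ) → x u = 0 := by
  have hr0 : r ≠ 0 := by omega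
  constructor
  · intro h
    have key : ∀ (a b : Fin ℓ) (m : ℕ) (hm : m < r), a < b → ℓ - 3 ≤ (a : ℕ) →
        x a = zeta r ^ m * x b := by
      intro a b m hm h1 h2
      rw [bigZ, Submodule.mem_finsetInf] at h
      exact mem_ker_formIJ.mp (h ⟨a, b, ⟨m, hm⟩⟩
        (Finset.mem_filter.mpr ⟨Finset.mem_univ _, h1, h2⟩))
    have hAB0 := key ⟨ℓ - 3, by omega⟩ ⟨ℓ - 2, by omega⟩ 0 (by omega)
      (show ℓ - 3 < ℓ - 2 by omega) (le_refl _)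
    have hAB1 := key ⟨ℓ - 3, by omega⟩ ⟨ℓ - 2, by omega⟩ 1 (by omega)
      (show ℓ - 3 < ℓ - 2 by omega) (le_refl _)
    have hBC0 := key ⟨ℓ - 2, by omega⟩ ⟨ℓ - 1, by omega⟩ 0 (by omega)
      (show ℓ - 2 < ℓ - 1 by omega) (by show ℓ - 3 ≤ ℓ - 2; omega)
    rw [pow_zero, one_mul] at hAB0 hBC0
    have hB : x ⟨ℓ - 2, by omega⟩ = 0 := by
      by_contra hB
      have h1 : (1 : ℂ) * x ⟨ℓ - 2, by omega⟩ =
          zeta r ^ (1 : ℕ) * x ⟨ℓ - 2, by omega⟩ := by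
        rw [one_mul, ← hAB1]; exact hAB0.symm
      have h2 := mul_right_cancel₀ hB h1
      have h3 : zeta r ^ (0 : ℕ) = zeta r ^ (1 : ℕ) := by
        rw [pow_zero]; exact h2
      have := zeta_pow_inj hr0 (by omega) (by omega) h3
      simp at this
    have hA : x ⟨ℓ - 3, by omega⟩ = 0 := by rw [hAB0]; exact hB
    have hC : x ⟨ℓ - 1, by omega⟩ = 0 := by rw [← hBC0]; exact hB
    intro u hu
    have hu' := u.isLt
    have : (u : ℕ) = ℓ - 3 ∨ (u : ℕ) = ℓ - 2 ∨ (u : ℕ) = ℓ - 1 := by omega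
    rcases this with h' | h' | h'
    · rw [show u = ⟨ℓ - 3, by omega⟩ from Fin.ext h']; exact hA
    · rw [show u = ⟨ℓ - 2, by omega⟩ from Fin.ext h']; exact hB
    · rw [show u = ⟨ℓ - 1, by omega⟩ from Fin.ext h']; exact hC
  · exact mem_bigZ_of

/-- Test vector: `1` on the first `ℓ-3` coordinates, `0` on the last three. -/
def wv (ℓ : ℕ) : Fin ℓ → ℂ := fun u => if (u : ℕ) < ℓ - 3 then 1 else 0

lemma wv_lt {ℓ : ℕ} {u : Fin ℓ} (h : (u : ℕ) < ℓ - 3) : wv ℓ u = 1 := if_pos h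
lemma wv_ge {ℓ : ℕ} {u : Fin ℓ} (h : ℓ - 3 ≤ (u : ℕ)) : wv ℓ u = 0 := if_neg (by omega)

/-- Standard basis test vector. -/
def stdv (ℓ : ℕ) (v : Fin ℓ) : Fin ℓ → ℂ := fun u => if u = v then 1 else 0

lemma stdv_same {ℓ : ℕ} (v : Fin ℓ) : stdv ℓ v v = 1 := if_pos rfl
lemma stdv_ne {ℓ : ℕ} {u v : Fin ℓ} (h : (u : ℕ) ≠ (v : ℕ)) : stdv ℓ v u = 0 :=
  if_neg fun hh => h (congrArg Fin.val hh)

/-- Test vector with `x i = c`, `x j = 1`, `0` elsewhere. -/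
def v2v (ℓ : ℕ) (i j : Fin ℓ) (c : ℂ) : Fin ℓ → ℂ :=
  fun u => if u = i then c else if u = j then 1 else 0

lemma v2v_i {ℓ : ℕ} {i j : Fin ℓ} {c : ℂ} : v2v ℓ i j c i = c := if_pos rfl
lemma v2v_j {ℓ : ℕ} {i j : Fin ℓ} {c : ℂ} (h : (j : ℕ) ≠ (i : ℕ)) : v2v ℓ i j c j = 1 := by
  rw [v2v]
  rw [if_neg fun hh => h (congrArg Fin.val hh), if_pos rfl]
lemma v2v_other {ℓ : ℕ} {i j u : Fin ℓ} {c : ℂ} (h1 : (u : ℕ) ≠ (i : ℕ))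
    (h2 : (u : ℕ) ≠ (j : ℕ)) : v2v ℓ i j c u = 0 := by
  rw [v2v]
  rw [if_neg fun hh => h1 (congrArg Fin.val hh), if_neg fun hh => h2 (congrArg Fin.val hh)]

lemma loc_pair (r ℓ k : ℕ) (hr : 3 ≤ r) (hl : 5 ≤ ℓ) (hk : k ≤ ℓ - 3)
    (s t : Fin ℓ) (hst : s < t) (ht3 : (t : ℕ) < ℓ - 3)
    (i j : Fin ℓ) (n : Fin r) (hi3 : ℓ - 3 ≤ (i : ℕ)) (hij : i < j) :
    loc ℂ (interArr r ℓ k)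
        (LinearMap.ker (formIJ ℓ s t r 0) ⊓ LinearMap.ker (formIJ ℓ i j r (n : ℕ)))
      = {LinearMap.ker (formIJ ℓ s t r 0), LinearMap.ker (formIJ ℓ i j r (n : ℕ))} := by
  have hst' : (s : ℕ) < (t : ℕ) := hst
  have hij' : (i : ℕ) < (j : ℕ) := hij
  have hjl : (j : ℕ) < ℓ := j.isLt
  have hs3 : (s : ℕ) < ℓ - 3 := by omega
  have hr0 : r ≠ 0 := by omega
  have hwH0 : wv ℓ ∈ LinearMap.ker (formIJ ℓ s t r 0) := by
    rw [mem_H0, wv_lt hs3, wv_lt ht3]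
  have hwH : wv ℓ ∈ LinearMap.ker (formIJ ℓ i j r (n : ℕ)) := by
    rw [mem_ker_formIJ, wv_ge hi3, wv_ge (by omega), mul_zero]
  have hv2H0 : v2v ℓ i j (zeta r ^ (n : ℕ)) ∈ LinearMap.ker (formIJ ℓ s t r 0) := by
    rw [mem_H0, v2v_other (by omega) (by omega), v2v_other (by omega) (by omega)]
  have hv2H : v2v ℓ i j (zeta r ^ (n : ℕ)) ∈ LinearMap.ker (formIJ ℓ i j r (n : ℕ)) := by
    rw [mem_ker_formIJ, v2v_i, v2v_j (by omega), mul_one]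
  ext H'
  simp only [loc, Finset.mem_filter, Finset.mem_insert, Finset.mem_singleton]
  constructor
  · rintro ⟨hmem, hle⟩
    rcases mem_interArr.mp hmem with ⟨m, hmk, rfl⟩ | ⟨a, b, p, hab, rfl⟩
    · exfalso
      have h1 := mem_ker_coordForm.mp (hle (Submodule.mem_inf.mpr ⟨hwH0, hwH⟩))
      rw [wv_lt (by omega)] at h1
      exact one_ne_zero h1
    · have hab' : (a : ℕ) < (b : ℕ) := hab
      have hbl : (b : ℕ) < ℓ := b.isLt
      have hw := mem_ker_formIJ.mp (hle (Submodule.mem_inf.mpr ⟨hwH0, hwH⟩))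
      have hv2 := mem_ker_formIJ.mp (hle (Submodule.mem_inf.mpr ⟨hv2H0, hv2H⟩))
      by_cases hb3 : (b : ℕ) < ℓ - 3
      · left
        have ha3 : (a : ℕ) < ℓ - 3 := by omega
        rw [wv_lt ha3, wv_lt hb3, mul_one] at hw
        have hp0 : (0 : ℕ) = (p : ℕ) := zeta_pow_inj hr0 (by omega) p.isLt
          (by rw [pow_zero]; exact hw)
        have hbst : (b : ℕ) = (s : ℕ) ∨ (b : ℕ) = (t : ℕ) := by
          by_contra hc
          push_neg at hc
          have hm : stdv ℓ b ∈ LinearMap.ker (formIJ ℓ s t r 0) ⊓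
              LinearMap.ker (formIJ ℓ i j r (n : ℕ)) := Submodule.mem_inf.mpr
            ⟨by rw [mem_H0, stdv_ne (by omega), stdv_ne (by omega)],
             by rw [mem_ker_formIJ, stdv_ne (by omega), stdv_ne (by omega), mul_zero]⟩
          have hc2 := mem_ker_formIJ.mp (hle hm)
          rw [stdv_ne (by omega), stdv_same, mul_one] at hc2
          exact zeta_pow_ne_zero hr0 _ hc2.symm
        have hast : (a : ℕ) = (s : ℕ) ∨ (a : ℕ) = (t : ℕ) := by
          by_contra hc
          push_neg at hc
          have hm : stdv ℓ a ∈ LinearMap.ker (formIJ ℓ s t r 0) ⊓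
              LinearMap.ker (formIJ ℓ i j r (n : ℕ)) := Submodule.mem_inf.mpr
            ⟨by rw [mem_H0, stdv_ne (by omega), stdv_ne (by omega)],
             by rw [mem_ker_formIJ, stdv_ne (by omega), stdv_ne (by omega), mul_zero]⟩
          have hc2 := mem_ker_formIJ.mp (hle hm)
          rw [stdv_same, stdv_ne (by omega), mul_zero] at hc2
          exact one_ne_zero hc2
        have ha : a = s := Fin.ext (by omega)
        have hb : b = t := Fin.ext (by omega)
        rw [ha, hb, ← hp0]
      · by_cases ha3 : (a : ℕ) < ℓ - 3
        · exfalso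
          rw [wv_lt ha3, wv_ge (by omega), mul_zero] at hw
          exact one_ne_zero hw
        · by_cases hbij : (b : ℕ) = (i : ℕ) ∨ (b : ℕ) = (j : ℕ)
          · by_cases haij : (a : ℕ) = (i : ℕ) ∨ (a : ℕ) = (j : ℕ)
            · right
              have ha : a = i := Fin.ext (by omega)
              have hb : b = j := Fin.ext (by omega)
              rw [ha, hb] at hv2 ⊢
              rw [v2v_i, v2v_j (by omega), mul_one] at hv2
              have hnp : (n : ℕ) = (p : ℕ) := zeta_pow_inj hr0 n.isLt p.isLt hv2
              rw [← hnp]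
            · exfalso
              push_neg at haij
              have hm : stdv ℓ a ∈ LinearMap.ker (formIJ ℓ s t r 0) ⊓
                  LinearMap.ker (formIJ ℓ i j r (n : ℕ)) := Submodule.mem_inf.mpr
                ⟨by rw [mem_H0, stdv_ne (by omega), stdv_ne (by omega)],
                 by rw [mem_ker_formIJ, stdv_ne (by omega), stdv_ne (by omega), mul_zero]⟩
              have hc2 := mem_ker_formIJ.mp (hle hm)
              rw [stdv_same, stdv_ne (by omega), mul_zero] at hc2
              exact one_ne_zero hc2
          · exfalso
            push_neg at hbij
            have hm : stdv ℓ b ∈ LinearMap.ker (formIJ ℓ s t r 0) ⊓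
                LinearMap.ker (formIJ ℓ i j r (n : ℕ)) := Submodule.mem_inf.mpr
              ⟨by rw [mem_H0, stdv_ne (by omega), stdv_ne (by omega)],
               by rw [mem_ker_formIJ, stdv_ne (by omega), stdv_ne (by omega), mul_zero]⟩
            have hc2 := mem_ker_formIJ.mp (hle hm)
            rw [stdv_ne (by omega), stdv_same, mul_one] at hc2
            exact zeta_pow_ne_zero hr0 _ hc2.symm
  · rintro (rfl | rfl)
    · exact ⟨mem_interArr.mpr (Or.inr ⟨s, t, ⟨0, by omega⟩, hst, rfl⟩), inf_le_left⟩
    · exact ⟨mem_interArr.mpr (Or.inr ⟨i, j, n, hij, rfl⟩), inf_le_right⟩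

lemma locZ_char (r ℓ k : ℕ) (hr : 3 ≤ r) (hl : 5 ≤ ℓ) (hk : k ≤ ℓ - 3)
    (s t : Fin ℓ) (hst : s < t) (ht3 : (t : ℕ) < ℓ - 3) (H : Submodule ℂ (Fin ℓ → ℂ)) :
    (H ∈ interArr r ℓ k ∧ H ≠ LinearMap.ker (formIJ ℓ s t r 0) ∧
      LinearMap.ker (formIJ ℓ s t r 0) ⊓ bigZ r ℓ ≤ H) ↔
    ∃ (i j : Fin ℓ) (n : Fin r), ℓ - 3 ≤ (i : ℕ) ∧ i < j ∧
      H = LinearMap.ker (formIJ ℓ i j r (n : ℕ)) := by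
  have hst' : (s : ℕ) < (t : ℕ) := hst
  have hs3 : (s : ℕ) < ℓ - 3 := by omega
  have hr0 : r ≠ 0 := by omega
  have hwH0 : wv ℓ ∈ LinearMap.ker (formIJ ℓ s t r 0) := by
    rw [mem_H0, wv_lt hs3, wv_lt ht3]
  have hwZ : wv ℓ ∈ bigZ r ℓ := mem_bigZ_of fun u hu => wv_ge hu
  constructor
  · rintro ⟨hmem, hne, hle⟩
    have hwmem : wv ℓ ∈ LinearMap.ker (formIJ ℓ s t r 0) ⊓ bigZ r ℓ :=
      Submodule.mem_inf.mpr ⟨hwH0, hwZ⟩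
    rcases mem_interArr.mp hmem with ⟨m, hmk, rfl⟩ | ⟨a, b, p, hab, rfl⟩
    · exfalso
      have h1 := mem_ker_coordForm.mp (hle hwmem)
      rw [wv_lt (by omega)] at h1
      exact one_ne_zero h1
    · have hab' : (a : ℕ) < (b : ℕ) := hab
      have hbl : (b : ℕ) < ℓ := b.isLt
      have hw := mem_ker_formIJ.mp (hle hwmem)
      by_cases hb3 : (b : ℕ) < ℓ - 3
      · exfalso
        have ha3 : (a : ℕ) < ℓ - 3 := by omega
        rw [wv_lt ha3, wv_lt hb3, mul_one] at hw
        have hp0 : (0 : ℕ) = (p : ℕ) := zeta_pow_inj hr0 (by omega) p.isLt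
          (by rw [pow_zero]; exact hw)
        have hbst : (b : ℕ) = (s : ℕ) ∨ (b : ℕ) = (t : ℕ) := by
          by_contra hc
          push_neg at hc
          have hm : stdv ℓ b ∈ LinearMap.ker (formIJ ℓ s t r 0) ⊓ bigZ r ℓ :=
            Submodule.mem_inf.mpr
            ⟨by rw [mem_H0, stdv_ne (by omega), stdv_ne (by omega)],
             mem_bigZ_of fun u hu => stdv_ne (by omega)⟩
          have hc2 := mem_ker_formIJ.mp (hle hm)
          rw [stdv_ne (by omega), stdv_same, mul_one] at hc2
          exact zeta_pow_ne_zero hr0 _ hc2.symm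
        have hast : (a : ℕ) = (s : ℕ) ∨ (a : ℕ) = (t : ℕ) := by
          by_contra hc
          push_neg at hc
          have hm : stdv ℓ a ∈ LinearMap.ker (formIJ ℓ s t r 0) ⊓ bigZ r ℓ :=
            Submodule.mem_inf.mpr
            ⟨by rw [mem_H0, stdv_ne (by omega), stdv_ne (by omega)],
             mem_bigZ_of fun u hu => stdv_ne (by omega)⟩
          have hc2 := mem_ker_formIJ.mp (hle hm)
          rw [stdv_same, stdv_ne (by omega), mul_zero] at hc2
          exact one_ne_zero hc2
        have ha : a = s := Fin.ext (by omega)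
        have hb : b = t := Fin.ext (by omega)
        apply hne
        rw [ha, hb, ← hp0]
      · by_cases ha3 : (a : ℕ) < ℓ - 3
        · exfalso
          rw [wv_lt ha3, wv_ge (by omega), mul_zero] at hw
          exact one_ne_zero hw
        · exact ⟨a, b, p, by omega, hab, rfl⟩
  · rintro ⟨i, j, n, hi3, hij, rfl⟩
    have hij' : (i : ℕ) < (j : ℕ) := hij
    have hjl : (j : ℕ) < ℓ := j.isLt
    refine ⟨mem_interArr.mpr (Or.inr ⟨i, j, n, hij, rfl⟩), ?_, ?_⟩
    · intro hEq
      have hmem : stdv ℓ s ∈ LinearMap.ker (formIJ ℓ s t r 0) := by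
        rw [← hEq, mem_ker_formIJ, stdv_ne (by omega), stdv_ne (by omega), mul_zero]
      rw [mem_H0, stdv_same, stdv_ne (by omega)] at hmem
      exact one_ne_zero hmem
    · intro x hx
      obtain ⟨hx0, hxZ⟩ := Submodule.mem_inf.mp hx
      rw [mem_ker_formIJ, (mem_bigZ_iff hr hl).mp hxZ i hi3,
        (mem_bigZ_iff hr hl).mp hxZ j (by omega), mul_zero]

lemma mem_locrestr_iff (r ℓ k : ℕ) (hr : 3 ≤ r) (hl : 5 ≤ ℓ) (hk : k ≤ ℓ - 3)
    (s t : Fin ℓ) (hst : s < t) (ht3 : (t : ℕ) < ℓ - 3)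
    (Y : Submodule ℂ ↥(LinearMap.ker (formIJ ℓ s t r 0))) :
    Y ∈ loc ℂ (restr ℂ (interArr r ℓ k) (LinearMap.ker (formIJ ℓ s t r 0)))
        (bigX r ℓ s t) ↔
    ∃ (i j : Fin ℓ) (n : Fin r), ℓ - 3 ≤ (i : ℕ) ∧ i < j ∧
      Y = Submodule.comap (LinearMap.ker (formIJ ℓ s t r 0)).subtype
            (LinearMap.ker (formIJ ℓ i j r (n : ℕ))) := by
  constructor
  · intro hY
    obtain ⟨hY1, hY2⟩ := Finset.mem_filter.mp hY
    obtain ⟨H, hH, rfl⟩ := Finset.mem_image.mp hY1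
    obtain ⟨hne, hmem⟩ := Finset.mem_erase.mp hH
    have hle : LinearMap.ker (formIJ ℓ s t r 0) ⊓ bigZ r ℓ ≤ H := by
      have h2 := Submodule.map_le_iff_le_comap.mpr hY2
      rwa [bigX, Submodule.map_comap_subtype] at h2
    obtain ⟨i, j, n, h1, h2, rfl⟩ :=
      (locZ_char r ℓ k hr hl hk s t hst ht3 H).mp ⟨hmem, hne, hle⟩
    exact ⟨i, j, n, h1, h2, rfl⟩
  · rintro ⟨i, j, n, h1, h2, rfl⟩
    obtain ⟨hmem, hne, hle⟩ := (locZ_char r ℓ k hr hl hk s t hst ht3 _).mpr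
      ⟨i, j, n, h1, h2, rfl⟩
    refine Finset.mem_filter.mpr
      ⟨Finset.mem_image.mpr ⟨_, Finset.mem_erase.mpr ⟨hne, hmem⟩, rfl⟩, ?_⟩
    rw [bigX]
    exact Submodule.map_le_iff_le_comap.mp (by rw [Submodule.map_comap_subtype]; exact hle)

/-- The projection onto the last three coordinates, restricted to `H₀`. -/
def proj3 (r ℓ : ℕ) (hl : 5 ≤ ℓ) (s t : Fin ℓ) :
    ↥(LinearMap.ker (formIJ ℓ s t r 0)) →ₗ[ℂ] (Fin 3 → ℂ) :=
  LinearMap.pi fun m =>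
    (LinearMap.proj (⟨ℓ - 3 + (m : ℕ), by have := m.isLt; omega⟩ : Fin ℓ)).comp
      (LinearMap.ker (formIJ ℓ s t r 0)).subtype

lemma proj3_surj (r ℓ : ℕ) (hl : 5 ≤ ℓ) (s t : Fin ℓ)
    (hs3 : (s : ℕ) < ℓ - 3) (ht3 : (t : ℕ) < ℓ - 3) :
    Function.Surjective (proj3 r ℓ hl s t) := by
  intro y
  have hx0 : (fun u : Fin ℓ => if h : ℓ - 3 ≤ (u : ℕ) then
      y ⟨(u : ℕ) - (ℓ - 3), by have := u.isLt; omega⟩ else 0)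
      ∈ LinearMap.ker (formIJ ℓ s t r 0) := by
    rw [mem_H0, dif_neg (by omega), dif_neg (by omega)]
  refine ⟨⟨_, hx0⟩, ?_⟩
  funext m
  have hm := m.isLt
  show (fun u : Fin ℓ => if h : ℓ - 3 ≤ (u : ℕ) then
      y ⟨(u : ℕ) - (ℓ - 3), by have := u.isLt; omega⟩ else 0)
    (⟨ℓ - 3 + (m : ℕ), by omega⟩ : Fin ℓ) = y m
  simp only []
  rw [dif_pos (by show ℓ - 3 ≤ ℓ - 3 + (m : ℕ); omega)]
  exact congrArg y (Fin.ext (by show ℓ - 3 + (m : ℕ) - (ℓ - 3) = (m : ℕ); omega))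

lemma ker_proj3 (r ℓ : ℕ) (hr : 3 ≤ r) (hl : 5 ≤ ℓ) (s t : Fin ℓ) :
    LinearMap.ker (proj3 r ℓ hl s t) = bigX r ℓ s t := by
  ext x
  rw [LinearMap.mem_ker, bigX, Submodule.mem_comap]
  rw [show ((LinearMap.ker (formIJ ℓ s t r 0)).subtype x : Fin ℓ → ℂ) = (x : Fin ℓ → ℂ)
    from rfl]
  rw [mem_bigZ_iff hr hl, funext_iff]
  constructor
  · intro h u hu
    have heq : (⟨ℓ - 3 + ((u : ℕ) - (ℓ - 3)), by have := u.isLt; omega⟩ : Fin ℓ) = u := by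
      apply Fin.ext
      show ℓ - 3 + ((u : ℕ) - (ℓ - 3)) = (u : ℕ)
      omega
    have hx := h ⟨(u : ℕ) - (ℓ - 3), by have := u.isLt; omega⟩
    rw [← heq]
    simpa [proj3] using hx
  · intro h m
    have heval : proj3 r ℓ hl s t x m =
        (x : Fin ℓ → ℂ) ⟨ℓ - 3 + (m : ℕ), by have := m.isLt; omega⟩ := rfl
    rw [heval, Pi.zero_apply]
    exact h _ (by show ℓ - 3 ≤ ℓ - 3 + (m : ℕ); omega)

lemma finrank_H0 (r ℓ : ℕ) (s t : Fin ℓ) (hne : (s : ℕ) ≠ (t : ℕ)) :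
    finrank ℂ ↥(LinearMap.ker (formIJ ℓ s t r 0)) = ℓ - 1 := by
  have hval : formIJ ℓ s t r 0 (stdv ℓ s) = 1 := by
    rw [formIJ]
    simp only [LinearMap.sub_apply, LinearMap.smul_apply, LinearMap.proj_apply, pow_zero,
      one_smul]
    rw [stdv_same, stdv_ne fun hh => hne hh.symm, sub_zero]
  have hsurj : LinearMap.range (formIJ ℓ s t r 0) = ⊤ := by
    rw [LinearMap.range_eq_top]
    intro c
    exact ⟨c • stdv ℓ s, by rw [map_smul, hval, smul_eq_mul, mul_one]⟩
  have h := LinearMap.finrank_range_add_finrank_ker (formIJ ℓ s t r 0)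
  rw [hsurj, finrank_top] at h
  have h2 : finrank ℂ (Fin ℓ → ℂ) = ℓ := by simp
  have h3 : finrank ℂ ℂ = 1 := Module.finrank_self ℂ
  have hl1 : 1 ≤ ℓ := by
    rcases Nat.eq_zero_or_pos ℓ with h0 | h0
    · exact absurd (h0 ▸ s).isLt (by omega)
    · omega
  omega

lemma finrank_bigX (r ℓ : ℕ) (hr : 3 ≤ r) (hl : 5 ≤ ℓ) (s t : Fin ℓ)
    (hst : s < t) (ht3 : (t : ℕ) < ℓ - 3) :
    finrank ℂ ↥(bigX r ℓ s t) = ℓ - 4 := by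
  have hst' : (s : ℕ) < (t : ℕ) := hst
  have h := LinearMap.finrank_range_add_finrank_ker (proj3 r ℓ hl s t)
  rw [ker_proj3 r ℓ hr hl s t,
    LinearMap.range_eq_top.mpr (proj3_surj r ℓ hl s t (by omega) ht3), finrank_top,
    finrank_H0 r ℓ s t (by omega)] at h
  have h3 : finrank ℂ (Fin 3 → ℂ) = 3 := by simp
  omega

lemma comap_proj3 (r ℓ : ℕ) (hl : 5 ≤ ℓ) (s t : Fin ℓ) (a b : Fin 3) (n : ℕ) :
    Submodule.comap (proj3 r ℓ hl s t) (LinearMap.ker (formIJ 3 a b r n)) =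
    Submodule.comap (LinearMap.ker (formIJ ℓ s t r 0)).subtype
      (LinearMap.ker (formIJ ℓ ⟨ℓ - 3 + (a : ℕ), by have := a.isLt; omega⟩
        ⟨ℓ - 3 + (b : ℕ), by have := b.isLt; omega⟩ r n)) := by
  ext x
  simp only [Submodule.mem_comap, mem_ker_formIJ]
  rfl

end Aux

/-- For `𝒜 = 𝒜^k_ℓ(r)` (`r ≥ 3`, `ℓ ≥ 5`, `1 ≤ k ≤ ℓ-3`), `H₀ = ker(x_s - x_t)`
with `s < t` among the first `ℓ-3` coordinates, and `X = H₀ ∩ Z` as above: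
`X` has rank `3` in `L(𝒜'')`, the Ziegler multiplicity `κ` is identically `1` on
the localization `(𝒜'')_X`, and this localization is (up to pullback along a
surjection onto `ℂ³`, i.e. up to product with an empty arrangement) the
reflection arrangement `𝒜(G(r,r,3)) = 𝒜^0_3(r)`. -/
theorem ziegler_localization_Grr3 (r ℓ k : ℕ) (hr : 3 ≤ r) (hl : 5 ≤ ℓ)
    (hk1 : 1 ≤ k) (hk : k ≤ ℓ - 3)
    (s t : Fin ℓ) (hst : s < t) (ht : (t : ℕ) < ℓ - 3) :
    finrank ℂ ↥(LinearMap.ker (formIJ ℓ s t r 0)) - finrank ℂ ↥(bigX r ℓ s t) = 3 ∧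
    (∀ Y ∈ loc ℂ (restr ℂ (interArr r ℓ k) (LinearMap.ker (formIJ ℓ s t r 0)))
        (bigX r ℓ s t),
      ziegler ℂ (interArr r ℓ k) (LinearMap.ker (formIJ ℓ s t r 0)) Y = 1) ∧
    ∃ π : ↥(LinearMap.ker (formIJ ℓ s t r 0)) →ₗ[ℂ] (Fin 3 → ℂ),
      Function.Surjective π ∧
      loc ℂ (restr ℂ (interArr r ℓ k) (LinearMap.ker (formIJ ℓ s t r 0)))
          (bigX r ℓ s t) =
        (interArr r 3 0).image (Submodule.comap π) := by
  have hst' : (s : ℕ) < (t : ℕ) := hst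
  have hs3 : (s : ℕ) < ℓ - 3 := by omega
  refine ⟨?_, ?_, ?_⟩
  · rw [finrank_H0 r ℓ s t (by omega), finrank_bigX r ℓ hr hl s t hst ht]
    omega
  · intro Y hY
    obtain ⟨i, j, n, hi3, hij, rfl⟩ := (mem_locrestr_iff r ℓ k hr hl hk s t hst ht Y).mp hY
    have hne := ((locZ_char r ℓ k hr hl hk s t hst ht _).mpr ⟨i, j, n, hi3, hij, rfl⟩).2.1
    simp only [ziegler]
    rw [Submodule.map_comap_subtype, loc_pair r ℓ k hr hl hk s t hst ht i j n hi3 hij,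
      Finset.card_insert_of_notMem (by rw [Finset.mem_singleton]; exact fun h => hne h.symm),
      Finset.card_singleton]
  · refine ⟨proj3 r ℓ hl s t, proj3_surj r ℓ hl s t hs3 ht, ?_⟩
    ext Y
    rw [mem_locrestr_iff r ℓ k hr hl hk s t hst ht Y]
    simp only [Finset.mem_image]
    constructor
    · rintro ⟨i, j, n, hi3, hij, rfl⟩
      have hij' : (i : ℕ) < (j : ℕ) := hij
      have hjl : (j : ℕ) < ℓ := j.isLt
      refine ⟨LinearMap.ker (formIJ 3 ⟨(i : ℕ) - (ℓ - 3), by omega⟩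
        ⟨(j : ℕ) - (ℓ - 3), by omega⟩ r (n : ℕ)), ?_, ?_⟩
      · exact mem_interArr.mpr (Or.inr ⟨⟨(i : ℕ) - (ℓ - 3), by omega⟩,
          ⟨(j : ℕ) - (ℓ - 3), by omega⟩, n, Fin.mk_lt_mk.mpr (by omega), rfl⟩)
      · rw [comap_proj3 r ℓ hl s t]
        have hcongr : ∀ (i' j' : Fin ℓ), i' = i → j' = j →
            Submodule.comap (LinearMap.ker (formIJ ℓ s t r 0)).subtype
              (LinearMap.ker (formIJ ℓ i' j' r (n : ℕ))) =
            Submodule.comap (LinearMap.ker (formIJ ℓ s t r 0)).subtype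
              (LinearMap.ker (formIJ ℓ i j r (n : ℕ))) := by
          rintro _ _ rfl rfl; rfl
        apply hcongr
        · exact Fin.ext (by show ℓ - 3 + ((i : ℕ) - (ℓ - 3)) = (i : ℕ); omega)
        · exact Fin.ext (by show ℓ - 3 + ((j : ℕ) - (ℓ - 3)) = (j : ℕ); omega)
    · rintro ⟨H3, hH3, rfl⟩
      rcases mem_interArr.mp hH3 with ⟨m, hm, -⟩ | ⟨a, b, p, hab, rfl⟩
      · exact absurd hm (by omega)
      · have hab' : (a : ℕ) < (b : ℕ) := hab
        have hb3 := b.isLt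
        exact ⟨⟨ℓ - 3 + (a : ℕ), by omega⟩, ⟨ℓ - 3 + (b : ℕ), by omega⟩, p,
          (by show ℓ - 3 ≤ ℓ - 3 + (a : ℕ); omega), Fin.mk_lt_mk.mpr (by omega),
          comap_proj3 r ℓ hl s t a b (p : ℕ)⟩

end Arrangement
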